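/- arXiv:1308.5768 — 2 statements merged into one kernel-verified Lean document; each statement's English description precedes it below -/
import Mathlib

section
/- A type p ∈ S_n(A) containing a formula φ(x) is non-isolated if and only if p is finitely satisfiable in the set 𝒞 = φ(M̄) ∖ p(M̄). -/
/- A framework for global invariant types in a monster model, following
"Around rudimentarily finite types" conventions.  `N` is a large ("bigger
monster") elementary universe, `𝕄 : Set N` plays the role of the monster
model `M̄`; parameter sets are subsets of `N`.  A (partial/complete) type in
variables `α` is a set of formulas with free variables `α` and parameters
from `N`. -/

open FirstOrder FirstOrder.Language Set

variable {L : Language} {N : Type*} [L.Structure N] {α β γ : Type*}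

/-- Formulas with free variables `α` and parameters from `N`. -/
abbrev Fml (L : Language) (N : Type*) (α : Type*) := L.Formula (α ⊕ N)

/-- `v` realizes `φ` (parameters are interpreted by themselves). -/
def Rlz (v : α → N) (φ : Fml L N α) : Prop := φ.Realize (Sum.elim v id)

/-- `φ` has all its parameters in `B`. -/
def IsOver (B : Set N) (φ : Fml L N α) : Prop :=
  ∃ ψ : L.Formula (α ⊕ ↥B), φ = ψ.relabel (Sum.map id Subtype.val)

/-- The complete type of the tuple `v` over `B`. -/
def tp (B : Set N) (v : α → N) : Set (Fml L N α) := {φ | IsOver B φ ∧ Rlz v φ}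

/-- `v` realizes the restriction `p↾B` of the type `p` to the set `B`. -/
def RlzRes (p : Set (Fml L N α)) (B : Set N) (v : α → N) : Prop :=
  ∀ φ ∈ p, IsOver B φ → Rlz v φ

/-- `p↾B ⊢ p↾C` : every realization of `p↾B` realizes `p↾C`. -/
def ResEntails (p : Set (Fml L N α)) (B C : Set N) : Prop :=
  ∀ v : α → N, RlzRes p B v → RlzRes p C v

/-- Substitute the tuple `b` for the `β`-parameter slots of `φ`. -/
def substF {A : Set N} (φ : L.Formula (α ⊕ (↥A ⊕ β))) (b : β → N) : Fml L N α :=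
  φ.relabel (Sum.map id (Sum.elim Subtype.val b))

/-- `p` is `A`-invariant: membership of `φ(x, b̄)` in `p` depends only on `tp(b̄/A)`. -/
def Invariant (p : Set (Fml L N α)) (A : Set N) : Prop :=
  ∀ (n : ℕ) (b₁ b₂ : Fin n → N), tp (L := L) A b₁ = tp A b₂ →
    ∀ φ : L.Formula (α ⊕ (↥A ⊕ Fin n)), (substF φ b₁ ∈ p ↔ substF φ b₂ ∈ p)

/-- `p` is a (realized) global type over the monster `𝕄`. -/
def GlobalType (𝕄 : Set N) (p : Set (Fml L N α)) : Prop := ∃ v : α → N, p = tp 𝕄 v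

/-- `p` is non-algebraic. -/
def NonAlgebraic (p : Set (Fml L N α)) : Prop :=
  ∀ φ ∈ p, {v : α → N | Rlz v φ}.Infinite

/-- A Morley sequence in `p` over `A`, living inside the monster `𝕄`:
`a i ⊨ p↾(A ∪ {a j | j < i})`. -/
def IsMorley (𝕄 : Set N) (p : Set (Fml L N α)) (A : Set N) {ι : Type*} [Preorder ι]
    (a : ι → α → N) : Prop :=
  (∀ i, range (a i) ⊆ 𝕄) ∧
    ∀ i : ι, RlzRes p (A ∪ ⋃ (j : ι) (_ : j < i), range (a j)) (a i)

/-- `p` is generically stable, witnessed over `A`: it is non-algebraic,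
`A`-invariant, and every formula is finite or cofinite on every infinite
Morley sequence in `p` over `A`. -/
def GenStableOver (𝕄 : Set N) (p : Set (Fml L N α)) (A : Set N) : Prop :=
  NonAlgebraic p ∧ Invariant p A ∧
    ∀ (ι : Type) [LinearOrder ι] [Infinite ι], ∀ a : ι → α → N,
      IsMorley 𝕄 p A a →
        ∀ φ : Fml L N α, {i | Rlz (a i) φ}.Finite ∨ {i | ¬ Rlz (a i) φ}.Finite

/-- `p` is generically stable. -/
def GenStable (𝕄 : Set N) (p : Set (Fml L N α)) : Prop :=
  ∃ A : Set N, A ⊆ 𝕄 ∧ GenStableOver 𝕄 p A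

/-- `p` is regular over `A`: it is `A`-invariant and for every `B ⊇ A` and every
`a ⊨ p↾A`, either `a ⊨ p↾B` or `p↾B ⊢ p↾Ba`. -/
def RegularOver (𝕄 : Set N) (p : Set (Fml L N α)) (A : Set N) : Prop :=
  Invariant p A ∧
    ∀ B : Set N, A ⊆ B → B ⊆ 𝕄 → ∀ a : α → N, range a ⊆ 𝕄 →
      RlzRes p A a → (RlzRes p B a ∨ ResEntails p B (B ∪ range a))

/-- `p` is regular (over some small set). -/
def Regular (𝕄 : Set N) (p : Set (Fml L N α)) : Prop :=
  ∃ A : Set N, A ⊆ 𝕄 ∧ RegularOver 𝕄 p A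

/-- `(p, φ)` is a strongly regular pair over `A`. -/
def SRPairOver (𝕄 : Set N) (p : Set (Fml L N α)) (φ : Fml L N α) (A : Set N) : Prop :=
  Invariant p A ∧ IsOver A φ ∧ φ ∈ p ∧
    ∀ B : Set N, A ⊆ B → B ⊆ 𝕄 → ∀ a : α → N, range a ⊆ 𝕄 → Rlz a φ →
      (RlzRes p B a ∨ ResEntails p B (B ∪ range a))

/-- `p` is strongly regular. -/
def StronglyRegular (𝕄 : Set N) (p : Set (Fml L N α)) : Prop :=
  ∃ (φ : Fml L N α) (A : Set N), A ⊆ 𝕄 ∧ SRPairOver 𝕄 p φ A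

/-- `p` is symmetric: Morley pairs over any `B` are totally indiscernible. -/
def SymmetricOn (𝕄 : Set N) (p : Set (Fml L N α)) : Prop :=
  ∀ B : Set N, B ⊆ 𝕄 → ∀ a₁ a₂ : α → N, range a₁ ⊆ 𝕄 → range a₂ ⊆ 𝕄 →
    RlzRes p B a₁ → RlzRes p (B ∪ range a₁) a₂ →
      tp (L := L) B (Sum.elim a₁ a₂) = tp B (Sum.elim a₂ a₁)

/-- `p↾B ⊥ʷ q↾B`: the pair of restrictions determines a complete type over `B`. -/
def WeaklyOrthAt (p : Set (Fml L N α)) (q : Set (Fml L N β)) (B : Set N) : Prop :=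
  ∀ a a' : α → N, ∀ b b' : β → N, RlzRes p B a → RlzRes p B a' →
    RlzRes q B b → RlzRes q B b' →
      tp (L := L) B (Sum.elim a b) = tp B (Sum.elim a' b')

/-- Orthogonality of global types: `p(x) ∪ q(y)` determines a complete type over `𝕄`. -/
def Orthogonal (𝕄 : Set N) (p : Set (Fml L N α)) (q : Set (Fml L N β)) : Prop :=
  ∀ a a' : α → N, ∀ b b' : β → N, tp 𝕄 a = p → tp 𝕄 a' = p →
    tp 𝕄 b = q → tp 𝕄 b' = q →
      tp (L := L) 𝕄 (Sum.elim a b) = tp 𝕄 (Sum.elim a' b')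

/-- `a ∈ Sem_A(b)` : some formula `φ(x, b̄) ∈ tp(a/Ab̄)` implies `tp(a/A)`. -/
def SemiIsolated (A : Set N) (a : α → N) (b : β → N) : Prop :=
  ∃ φ : Fml L N α, IsOver (A ∪ range b) φ ∧ Rlz a φ ∧
    ∀ a' : α → N, Rlz a' φ → tp (L := L) A a' = tp A a

/-- The global Rudin–Keisler order: `p ≤_RK q` iff some realization of `p`
is semi-isolated over `𝕄` by some realization of `q`. -/
def RKle (𝕄 : Set N) (p : Set (Fml L N α)) (q : Set (Fml L N β)) : Prop :=
  ∃ (a : α → N) (b : β → N), tp 𝕄 a = p ∧ tp 𝕄 b = q ∧ SemiIsolated (L := L) 𝕄 a b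

/-- `p` is finitely satisfiable in the set `C`: every finite subtype has
infinitely many realizations in `C`. -/
def FinSat (p : Set (Fml L N α)) (C : Set (α → N)) : Prop :=
  ∀ s : Finset (Fml L N α), ↑s ⊆ p → {c ∈ C | ∀ φ ∈ s, Rlz c φ}.Infinite

/-- The complete type `p` over `A` is isolated. -/
def IsolatedTy (A : Set N) (p : Set (Fml L N α)) : Prop :=
  ∃ φ ∈ p, ∀ v : α → N, Rlz v φ → tp A v = p

/-- The restriction `p↾A` is isolated (by a single formula over `A`). -/
def IsolatedRes (p : Set (Fml L N α)) (A : Set N) : Prop :=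
  ∃ φ ∈ p, IsOver A φ ∧ ∀ v : α → N, Rlz v φ → RlzRes p A v

/-- `(p↾C, φ)` satisfies the weak orthogonality condition (WOR):
`p↾C ⊢ p↾Cb̄` for every tuple `b̄` of realizations of `φ` not realizing `p↾C`. -/
def WOR (𝕄 : Set N) (p : Set (Fml L N α)) (φ : Fml L N α) (C : Set N) : Prop :=
  ∀ (m : ℕ) (b : Fin m → α → N), (∀ i, range (b i) ⊆ 𝕄) →
    (∀ i, Rlz (b i) φ) → (∀ i, ¬ RlzRes p C (b i)) →
      ResEntails p C (C ∪ ⋃ i, range (b i))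

/-- `p` is definable over `A`. -/
def DefinableOver (𝕄 : Set N) (p : Set (Fml L N α)) (A : Set N) : Prop :=
  ∀ (n : ℕ) (φ : L.Formula (α ⊕ (↥A ⊕ Fin n))),
    ∃ dφ : L.Formula (↥A ⊕ Fin n), ∀ b : Fin n → N, range b ⊆ 𝕄 →
      (substF φ b ∈ p ↔ dφ.Realize (Sum.elim Subtype.val b))

section Aux
variable {L : Language} {N : Type*} [L.Structure N] {α : Type*}

lemma IsOver.inf' {B : Set N} {φ₁ φ₂ : Fml L N α} (h₁ : IsOver B φ₁) (h₂ : IsOver B φ₂) :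
    IsOver B (φ₁ ⊓ φ₂) := by
  obtain ⟨ψ₁, rfl⟩ := h₁; obtain ⟨ψ₂, rfl⟩ := h₂; exact ⟨ψ₁ ⊓ ψ₂, rfl⟩

lemma IsOver.not' {B : Set N} {φ : Fml L N α} (h : IsOver B φ) : IsOver B φ.not := by
  obtain ⟨ψ, rfl⟩ := h; exact ⟨ψ.not, rfl⟩

lemma isOver_top {B : Set N} : IsOver B (⊤ : Fml L N α) := ⟨⊤, rfl⟩

lemma rlz_inf {v : α → N} {φ₁ φ₂ : Fml L N α} : Rlz v (φ₁ ⊓ φ₂) ↔ Rlz v φ₁ ∧ Rlz v φ₂ := by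
  simp [Rlz]

lemma rlz_not {v : α → N} {φ : Fml L N α} : Rlz v φ.not ↔ ¬ Rlz v φ := by
  simp [Rlz]

lemma rlz_top {v : α → N} : Rlz v (⊤ : Fml L N α) := by simp [Rlz]

lemma exists_conj (B : Set N) (S : Finset (Fml L N α)) (h : ∀ χ ∈ S, IsOver B χ) :
    ∃ ψ : Fml L N α, IsOver B ψ ∧ ∀ v : α → N, Rlz v ψ ↔ ∀ χ ∈ S, Rlz v χ := by
  classical
  induction S using Finset.induction with
  | empty => exact ⟨⊤, isOver_top, fun v => by simp [rlz_top]⟩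
  | @insert χ S hχS ih =>
    obtain ⟨ψ, hψo, hψ⟩ := ih (fun χ' hχ' => h χ' (Finset.mem_insert_of_mem hχ'))
    refine ⟨χ ⊓ ψ, (h χ (Finset.mem_insert_self _ _)).inf' hψo, fun v => ?_⟩
    simp [rlz_inf, hψ v]

end Aux

/-- `p ∈ Sₙ(A)` containing `φ` is non-isolated iff `p` is finitely
satisfiable in `𝒞 = φ(M̄) ∖ p(M̄)`. -/
theorem nonisolated_iff_finSat (A : Set N) (n : ℕ) (v₀ : Fin n → N)
    (p : Set (Fml L N (Fin n))) (hp : p = tp A v₀)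
    (φ : Fml L N (Fin n)) (hφ : φ ∈ p) :
    ¬ IsolatedTy A p ↔ FinSat p {c : Fin n → N | Rlz c φ ∧ tp A c ≠ p} := by
    classical
  subst hp
  constructor
  · intro hni s hs
    by_contra hfin
    rw [Set.not_infinite] at hfin
    set F : Set (Fin n → N) :=
      {c | (Rlz c φ ∧ tp (L := L) A c ≠ tp A v₀) ∧ ∀ χ ∈ s, Rlz c χ} with hF
    have hchi : ∀ c, c ∈ hfin.toFinset → ∃ χ : Fml L N (Fin n),
        IsOver A χ ∧ Rlz v₀ χ ∧ ¬ Rlz c χ := by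
      intro c hc
      rw [Set.Finite.mem_toFinset] at hc
      have hne : tp (L := L) A c ≠ tp A v₀ := hc.1.2
      have : ¬ ∀ χ, χ ∈ tp A c ↔ χ ∈ tp A v₀ := fun h => hne (Set.ext h)
      push_neg at this
      obtain ⟨χ, hχ⟩ := this
      rcases hχ with ⟨h1, h2⟩ | ⟨h1, h2⟩
      · refine ⟨χ.not, h1.1.not', ?_, ?_⟩
        · rw [rlz_not]; exact fun hr => h2 ⟨h1.1, hr⟩
        · rw [rlz_not]; exact not_not_intro h1.2
      · exact ⟨χ, h2.1, h2.2, fun hr => h1 ⟨h2.1, hr⟩⟩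
    choose! χf hχf using hchi
    set S : Finset (Fml L N (Fin n)) :=
      insert φ (s ∪ (hfin.toFinset).image χf) with hS
    have hSover : ∀ χ ∈ S, IsOver A χ := by
      intro χ hχ
      rw [hS, Finset.mem_insert, Finset.mem_union, Finset.mem_image] at hχ
      rcases hχ with rfl | hχ | ⟨c, hc, rfl⟩
      · exact hφ.1
      · exact (hs hχ).1
      · exact (hχf c hc).1
    obtain ⟨ψ, hψo, hψ⟩ := exists_conj A S hSover
    refine hni ⟨ψ, ⟨hψo, ?_⟩, ?_⟩
    · rw [hψ]
      intro χ hχ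
      rw [hS, Finset.mem_insert, Finset.mem_union, Finset.mem_image] at hχ
      rcases hχ with rfl | hχ | ⟨c, hc, rfl⟩
      · exact hφ.2
      · exact (hs hχ).2
      · exact (hχf c hc).2.1
    · intro v hv
      by_contra htp
      rw [hψ] at hv
      have hvF : v ∈ F := by
        refine ⟨⟨hv φ (Finset.mem_insert_self _ _), htp⟩, fun χ hχ => ?_⟩
        exact hv χ (by rw [hS]; exact Finset.mem_insert_of_mem (Finset.mem_union_left _ hχ))
      have hvT : v ∈ hfin.toFinset := by rwa [Set.Finite.mem_toFinset]
      have : Rlz v (χf v) := hv (χf v) (by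
        rw [hS]
        exact Finset.mem_insert_of_mem
          (Finset.mem_union_right _ (Finset.mem_image_of_mem _ hvT)))
      exact (hχf v hvT).2.2 this
  · intro hFS ⟨ψ, hψp, hψ⟩
    have := hFS {ψ} (by simpa using hψp)
    obtain ⟨c, ⟨hcφ, hcp⟩, hcr⟩ := this.nonempty
    exact hcp (hψ c (hcr ψ (Finset.mem_singleton_self _)))
end

section
/- Let (𝔭, φ_𝔭) be A-invariant, definable and strongly regular, and a, b realizations of p = 𝔭↾A. If tp(a/Ab) is finitely satisfiable in 𝒞_𝔭 = φ_𝔭(M̄) ∖ p(M̄), then (a,b) is a Morley sequence in 𝔭 over A. -/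
/- A framework for global invariant types in a monster model, following
"Around rudimentarily finite types" conventions.  `N` is a large ("bigger
monster") elementary universe, `𝕄 : Set N` plays the role of the monster
model `M̄`; parameter sets are subsets of `N`.  A (partial/complete) type in
variables `α` is a set of formulas with free variables `α` and parameters
from `N`. -/

open FirstOrder FirstOrder.Language Set

variable {L : Language} {N : Type*} [L.Structure N] {α β γ : Type*}

section AuxLemmas

open FirstOrder.Language.BoundedFormula

namespace MyAux
variable {L : Language} {α' β' γ' : Type*}

lemma term_relabel_congr {γ δ : Type*} (f g : (α' ⊕ γ) → δ) [DecidableEq α'] (t : L.Term (α' ⊕ γ))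
    (h : ∀ v ∈ t.varFinsetLeft, f (Sum.inl v) = g (Sum.inl v))
    (h2 : ∀ c, f (Sum.inr c) = g (Sum.inr c)) : t.relabel f = t.relabel g := by
  induction t with
  | var v =>
    rcases v with v | c
    · simp [Term.relabel, h v (by simp [Term.varFinsetLeft])]
    · simp [Term.relabel, h2 c]
  | func F ts ih =>
    simp only [Term.relabel]
    congr 1
    funext i
    exact ih i (fun v hv => h v (Finset.mem_biUnion.2 ⟨i, Finset.mem_univ i, hv⟩))

lemma bf_relabel_congr [DecidableEq α'] {n : ℕ} (f g : α' → β' ⊕ Fin n) :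
    ∀ {k} (φ : L.BoundedFormula α' k), (∀ v ∈ φ.freeVarFinset, f v = g v) →
      φ.relabel f = φ.relabel g := by
  intro k φ
  induction φ with
  | falsum => intro _; rfl
  | equal t₁ t₂ =>
    intro h
    simp only [BoundedFormula.relabel, BoundedFormula.mapTermRel]
    congr 1 <;>
      refine term_relabel_congr _ _ _ (fun v hv => ?_) (fun c => by simp [BoundedFormula.relabelAux])
    · simp [BoundedFormula.relabelAux, h v (Finset.mem_union_left _ hv)]
    · simp [BoundedFormula.relabelAux, h v (Finset.mem_union_right _ hv)]
  | rel R ts =>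
    intro h
    simp only [BoundedFormula.relabel, BoundedFormula.mapTermRel]
    congr 1
    funext i
    refine term_relabel_congr _ _ _ (fun v hv => ?_) (fun c => by simp [BoundedFormula.relabelAux])
    have : v ∈ (BoundedFormula.rel R ts).freeVarFinset :=
      Finset.mem_biUnion.2 ⟨i, Finset.mem_univ i, hv⟩
    simp [BoundedFormula.relabelAux, h v this]
  | imp φ₁ φ₂ ih₁ ih₂ =>
    intro h
    simp only [BoundedFormula.relabel_imp]
    rw [show φ₁.relabel f = φ₁.relabel g from
        ih₁ (fun v hv => h v (Finset.mem_union_left _ hv)),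
      show φ₂.relabel f = φ₂.relabel g from
        ih₂ (fun v hv => h v (Finset.mem_union_right _ hv))]
  | all φ ih =>
    intro h
    simp only [BoundedFormula.relabel_all]
    rw [show φ.relabel f = φ.relabel g from ih h]

lemma relabel_congr [DecidableEq α'] {φ : L.Formula α'} {f g : α' → β'}
    (h : ∀ v ∈ φ.freeVarFinset, f v = g v) : φ.relabel f = φ.relabel g :=
  bf_relabel_congr (Sum.inl ∘ f) (Sum.inl ∘ g) φ (fun v hv => by simp [h v hv])

/-- An index-preserving relabeling of bounded formulas. -/
def relabel' (g : α' → β') {k} (φ : L.BoundedFormula α' k) : L.BoundedFormula β' k :=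
  φ.mapTermRel (fun _ t => t.relabel (Sum.map g id)) (fun _ => id) (fun _ => id)

lemma relabel'_comp (f : α' → β') (g : β' → γ') {k} (φ : L.BoundedFormula α' k) :
    relabel' g (relabel' f φ) = relabel' (g ∘ f) φ := by
  unfold relabel'
  rw [mapTermRel_mapTermRel]
  congr 1
  funext n t
  simp only [Function.comp_apply, Term.relabel_relabel]
  congr 1
  funext v
  rcases v with v | i <;> rfl

lemma relabelAux_eq_castLE (g : α' → β') (n : ℕ) :
    relabelAux (Sum.inl ∘ g : α' → β' ⊕ Fin 0) n =
      Sum.map id (Fin.castLE (Nat.le_of_eq (Nat.zero_add n).symm)) ∘ Sum.map g id := by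
  funext v
  rcases v with v | i
  · rfl
  · simp only [relabelAux, Function.comp_apply, Sum.map_inr, Equiv.sumAssoc_apply_inr, Sum.map_inr,
      id_eq]
    exact congrArg Sum.inr (Fin.ext (by simp))

lemma relabel_eq_relabel' (g : α' → β') :
    ∀ {k} (φ : L.BoundedFormula α' k),
      BoundedFormula.relabel (Sum.inl ∘ g : α' → β' ⊕ Fin 0) φ =
        (relabel' g φ).castLE (Nat.le_of_eq (Nat.zero_add k).symm) := by
  intro k φ
  induction φ with
  | falsum => rfl
  | equal t₁ t₂ =>
    simp only [BoundedFormula.relabel, relabel', mapTermRel, castLE, Term.relabel_relabel,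
      relabelAux_eq_castLE]
  | rel R ts =>
    simp only [BoundedFormula.relabel, relabel', mapTermRel, castLE]
    congr 1
    funext i
    simp only [Function.comp_apply, Term.relabel_relabel, relabelAux_eq_castLE]
  | imp φ₁ φ₂ ih₁ ih₂ =>
    simp only [BoundedFormula.relabel, relabel', mapTermRel, castLE] at *
    rw [ih₁, ih₂]
  | all φ ih =>
    simp only [BoundedFormula.relabel, relabel', mapTermRel, castLE] at *
    rw [ih]
    rw [castLE_castLE]
    rfl

lemma formula_relabel_eq (g : α' → β') (φ : L.Formula α') :
    φ.relabel g = relabel' g φ := by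
  rw [Formula.relabel, relabel_eq_relabel' g φ, castLE_rfl]

lemma relabel_comp (φ : L.Formula α') (f : α' → β') (g : β' → γ') :
    (φ.relabel f).relabel g = φ.relabel (g ∘ f) := by
  simp only [formula_relabel_eq, relabel'_comp]

end MyAux

/-- Any `substF` instance with parameters in `B` is over `B`. -/
lemma aux_isOver_substF {n : ℕ} {A B : Set N} (hAB : A ⊆ B) (d : Fin n → N)
    (hd : ∀ i, d i ∈ B) (φ' : L.Formula (α ⊕ (↥A ⊕ Fin n))) :
    IsOver B (substF φ' d) := by
  refine ⟨φ'.relabel (Sum.elim Sum.inl (Sum.elim (fun w => Sum.inr ⟨w.val, hAB w.prop⟩)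
    (fun i => Sum.inr ⟨d i, hd i⟩))), ?_⟩
  unfold substF
  rw [MyAux.relabel_comp]
  exact congrArg (fun f => Formula.relabel f φ') (funext fun v => by
    rcases v with j | (w | i) <;> rfl)

/-- Realization of `substF`. -/
lemma aux_rlz_substF {n : ℕ} {A : Set N} (d : Fin n → N) (c : α → N)
    (φ' : L.Formula (α ⊕ (↥A ⊕ Fin n))) :
    Rlz c (substF φ' d) ↔ φ'.Realize (Sum.elim c (Sum.elim Subtype.val d)) := by
  unfold Rlz substF
  rw [Formula.realize_relabel]
  rw [show (Sum.elim c id ∘ Sum.map id (Sum.elim Subtype.val d)) =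
      Sum.elim c (Sum.elim Subtype.val d) from funext fun v => by
    rcases v with j | (w | i) <;> rfl]

/-- The formula `¬ φ'(x, A, x·g ↦ params b)` rearranged as a formula over `A ∪ range b`. -/
lemma aux_mk_param_formula {n : ℕ} (A : Set N) (b : α → N) (g : Fin n → α)
    (φ' : L.Formula (α ⊕ (↥A ⊕ Fin n))) :
    ∃ θ : Fml L N α, IsOver (A ∪ range b) θ ∧
      ∀ c : α → N, (Rlz c θ ↔ ¬ φ'.Realize (Sum.elim b (Sum.elim Subtype.val (c ∘ g)))) := by
  refine ⟨((φ'.relabel (Sum.elim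
      (fun j => Sum.inr (⟨b j, Set.mem_union_right A (Set.mem_range_self j)⟩ : ↥(A ∪ range b)))
      (Sum.elim (fun w => Sum.inr ⟨w.val, Set.mem_union_left _ w.prop⟩)
        (fun i => Sum.inl (g i))))).not).relabel (Sum.map id Subtype.val),
    ⟨_, rfl⟩, fun c => ?_⟩
  unfold Rlz
  rw [Formula.realize_relabel, Formula.realize_not, Formula.realize_relabel]
  rw [show ((Sum.elim c id ∘ Sum.map id Subtype.val) ∘ (Sum.elim
      (fun j => Sum.inr (⟨b j, Set.mem_union_right A (Set.mem_range_self j)⟩ : ↥(A ∪ range b)))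
      (Sum.elim (fun w => Sum.inr ⟨w.val, Set.mem_union_left _ w.prop⟩)
        (fun i => Sum.inl (g i))))) = Sum.elim b (Sum.elim Subtype.val (c ∘ g)) from
    funext fun v => by rcases v with j | (w | i) <;> rfl]

/-- The defining formula `dφ(A, x·g)` as a formula over `A ∪ range b` in the variables `α`. -/
lemma aux_mk_def_formula {n : ℕ} (A : Set N) (b : α → N) (g : Fin n → α)
    (dφ : L.Formula (↥A ⊕ Fin n)) :
    ∃ χ : Fml L N α, IsOver (A ∪ range b) χ ∧
      ∀ c : α → N, (Rlz c χ ↔ dφ.Realize (Sum.elim Subtype.val (c ∘ g))) := by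
  refine ⟨(dφ.relabel (Sum.elim
      (fun w => Sum.inr (⟨w.val, Set.mem_union_left _ w.prop⟩ : ↥(A ∪ range b)))
      (fun i => Sum.inl (g i)))).relabel (Sum.map id Subtype.val), ⟨_, rfl⟩, fun c => ?_⟩
  unfold Rlz
  rw [Formula.realize_relabel, Formula.realize_relabel]
  rw [show ((Sum.elim c id ∘ Sum.map id Subtype.val) ∘ (Sum.elim
      (fun w => Sum.inr (⟨w.val, Set.mem_union_left _ w.prop⟩ : ↥(A ∪ range b)))
      (fun i => Sum.inl (g i)))) = Sum.elim Subtype.val (c ∘ g) from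
    funext fun v => by rcases v with w | i <;> rfl]

/-- Decomposition of a formula over `A ∪ range a` as a `substF` instance of a formula
over `A` with finitely many variable slots filled by values of `a`. -/
lemma aux_decomp (A : Set N) (a : α → N) (ψ₀ : L.Formula (α ⊕ ↥(A ∪ range a))) :
    ∃ (n : ℕ) (φ' : L.Formula (α ⊕ (↥A ⊕ Fin n))) (g : Fin n → α),
      substF φ' (a ∘ g) = ψ₀.relabel (Sum.map id Subtype.val) := by
  classical
  obtain ⟨q, hq⟩ : ∃ q : ↥(A ∪ range a) → ↥A ⊕ α,
      ∀ u, Sum.elim Subtype.val a (q u) = u.val := by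
    refine ⟨fun u => if h : u.val ∈ A then Sum.inl ⟨u.val, h⟩
      else Sum.inr (u.prop.resolve_left h).choose, fun u => ?_⟩
    by_cases h : u.val ∈ A
    · simp [h]
    · simp only [h, dif_neg, not_false_iff, Sum.elim_inr]
      exact (u.prop.resolve_left h).choose_spec
  set tR := ψ₀.freeVarFinset.filter
    (fun v => ∃ j : α, ∃ u, v = Sum.inr u ∧ q u = Sum.inr j) with htR
  set e := tR.equivFin with he
  have hsel : ∀ i : Fin tR.card, ∃ j : α, ∃ u,
      ((e.symm i : ↥tR) : α ⊕ ↥(A ∪ range a)) = Sum.inr u ∧ q u = Sum.inr j := by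
    intro i
    exact (Finset.mem_filter.mp (e.symm i).prop).2
  choose g uu huu hqg using hsel
  refine ⟨tR.card, ψ₀.relabel (fun v => if hv : v ∈ tR then Sum.inr (Sum.inr (e ⟨v, hv⟩))
    else Sum.elim Sum.inl
      (fun u => Sum.elim (fun w => Sum.inr (Sum.inl w)) Sum.inl (q u)) v), g, ?_⟩
  unfold substF
  rw [MyAux.relabel_comp]
  refine MyAux.relabel_congr (fun v hv => ?_)
  simp only [Function.comp_apply]
  by_cases hv' : v ∈ tR
  · rw [dif_pos hv']
    obtain ⟨j, u, hvu, hqj⟩ := (Finset.mem_filter.mp hv').2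
    subst hvu
    set i := e ⟨Sum.inr u, hv'⟩ with hi
    have h1 : e.symm i = ⟨Sum.inr u, hv'⟩ := by rw [hi, Equiv.symm_apply_apply]
    have h2 := huu i
    rw [h1] at h2
    have h3 : uu i = u := Sum.inr.inj h2.symm
    have h4 : q u = Sum.inr (g i) := h3 ▸ hqg i
    have h5 := hq u
    rw [h4] at h5
    simp only [Sum.elim_inr] at h5
    simp only [Sum.map_inr, Sum.elim_inr, Function.comp_apply]
    exact congrArg Sum.inr h5
  · rw [dif_neg hv']
    rcases v with j | u
    · rfl
    · simp only [Sum.elim_inr]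
      rcases hqu : q u with w | j
      · have h5 := hq u
        rw [hqu] at h5
        simp only [Sum.elim_inl] at h5
        simp only [Sum.elim_inl, Sum.map_inr, id_eq]
        exact congrArg Sum.inr h5
      · exact absurd (Finset.mem_filter.2 ⟨hv, j, u, rfl, hqu⟩) hv'

end AuxLemmas

/-- if `(p, φ)` is `A`-invariant, definable and strongly regular,
`a, b ⊨ p↾A`, and `tp(a/Ab)` is finitely satisfiable in
`𝒞_p = φ(M̄) ∖ (p↾A)(M̄)`, then `(a, b)` is a Morley sequence in `p` over `A`. -/
theorem finSat_morley_pair (𝕄 A : Set N) (hA𝕄 : A ⊆ 𝕄)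
    (p : Set (Fml L N α)) (φ : Fml L N α)
    (hsr : SRPairOver 𝕄 p φ A) (hdef : DefinableOver 𝕄 p A)
    (a b : α → N) (ha𝕄 : range a ⊆ 𝕄) (hb𝕄 : range b ⊆ 𝕄)
    (ha : RlzRes p A a) (hb : RlzRes p A b)
    (hfs : FinSat (tp (L := L) (A ∪ range b) a)
      {c : α → N | range c ⊆ 𝕄 ∧ Rlz c φ ∧ ¬ RlzRes p A c}) :
    RlzRes p A a ∧ RlzRes p (A ∪ range a) b := by
  classical
  refine ⟨ha, ?_⟩
  rintro ψ hψp hψover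
  by_contra hbψ
  obtain ⟨ψ₀, rfl⟩ := hψover
  obtain ⟨n, φ', g, hkey⟩ := aux_decomp A a ψ₀
  rw [← hkey] at hψp hbψ
  obtain ⟨dφ, hdφ⟩ := hdef n φ'
  have hag : range (a ∘ g) ⊆ 𝕄 := (range_comp_subset_range g a).trans ha𝕄
  have hda : dφ.Realize (Sum.elim Subtype.val (a ∘ g)) := (hdφ (a ∘ g) hag).1 hψp
  obtain ⟨θ, hθover, hθrlz⟩ := aux_mk_param_formula A b g φ'
  obtain ⟨χ, hχover, hχrlz⟩ := aux_mk_def_formula A b g dφ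
  have hθa : Rlz a θ :=
    (hθrlz a).2 (fun hreal => hbψ ((aux_rlz_substF (a ∘ g) b φ').2 hreal))
  have hχa : Rlz a χ := (hχrlz a).2 hda
  have hsub : (({θ, χ} : Finset (Fml L N α)) : Set (Fml L N α)) ⊆ tp (A ∪ range b) a := by
    intro x hx
    simp only [Finset.coe_insert, Finset.coe_singleton, mem_insert_iff, mem_singleton_iff] at hx
    rcases hx with rfl | rfl
    · exact ⟨hθover, hθa⟩
    · exact ⟨hχover, hχa⟩
  obtain ⟨c, ⟨hc𝕄, hcφ, hcnp⟩, hcall⟩ := (hfs ({θ, χ} : Finset (Fml L N α)) hsub).nonempty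
  have hcθ : Rlz c θ := hcall θ (by simp)
  have hcχ : Rlz c χ := hcall χ (by simp)
  have hcg : range (c ∘ g) ⊆ 𝕄 := (range_comp_subset_range g c).trans hc𝕄
  have hpc : substF φ' (c ∘ g) ∈ p := (hdφ (c ∘ g) hcg).2 ((hχrlz c).1 hcχ)
  rcases hsr.2.2.2 A subset_rfl hA𝕄 c hc𝕄 hcφ with h | h
  · exact hcnp h
  · have hbres : RlzRes p (A ∪ range c) b := h b hb
    have hover : IsOver (A ∪ range c) (substF φ' (c ∘ g)) :=
      aux_isOver_substF subset_union_left (c ∘ g)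
        (fun i => Or.inr (mem_range_self (g i))) φ'
    have hbrlz : Rlz b (substF φ' (c ∘ g)) := hbres _ hpc hover
    exact (hθrlz c).1 hcθ ((aux_rlz_substF (c ∘ g) b φ').1 hbrlz)
end
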